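/- Let N, D : X → R with D > 0 on X, and let x* ∈ X with α* = N(x*)/D(x*). Then x* minimizes N(x)/D(x) over X if and only if x* minimizes N(x) - α*·D(x) over X and the minimum value of N(x) - α*·D(x) equals 0. -/

import Mathlib

/-! `α` bounds the ratio `N / D` from below exactly when `N - α D` is nonnegative, since `D > 0`;
at `α = N(x*)/D(x*)` the function `N - α D` vanishes at `x*`, so the two minimisation problems
coincide. -/

theorem le_div_iff_sub_mul_nonneg {𝕜 : Type*} [Field 𝕜] [LinearOrder 𝕜] [IsStrictOrderedRing 𝕜]
    {a n d : 𝕜} (hd : 0 < d) : a ≤ n / d ↔ 0 ≤ n - a * d := by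
  rw [le_div_iff₀ hd, sub_nonneg]

/-- Fundamental Dinkelbach equivalence: `x*` minimizes `N/D` iff `x*` minimizes
`N - α* D` with minimum value `0`, where `α* = N(x*)/D(x*)`. -/
theorem dinkelbach_equivalence {X : Type*} (N D : X → ℝ) (hD : ∀ y, 0 < D y)
    (xs : X) :
    (∀ x, N xs / D xs ≤ N x / D x) ↔
      ((∀ x, N xs - (N xs / D xs) * D xs ≤ N x - (N xs / D xs) * D x) ∧
        N xs - (N xs / D xs) * D xs = 0) := by
  have hzero : N xs - N xs / D xs * D xs = 0 := by
    rw [div_mul_cancel₀ _ (hD xs).ne', sub_self]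
  rw [hzero, and_iff_left rfl]
  exact forall_congr' fun x => le_div_iff_sub_mul_nonneg (hD x)
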